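/- arXiv:1609.08111 — 10 statements merged into one kernel-verified Lean document; each statement's English description precedes it below -/
import Mathlib

section
/- For every real number α > 0 there exists a constant C > 0 such that for every real number p ≥ 1 and every natural number n with n > 2α, one has (n/p)! / ((n−α)/p)! ≤ C · n^{α/p}. -/
/-!
Log-convexity of `Γ` between `x` and `x + 1`, together with `Γ (x + 1) = x Γ x`, gives
`Γ (x + t) ≤ Γ x · x ^ t` for `0 ≤ t ≤ 1`; the functional equation extends this to
`Γ (x + t) ≤ Γ x · (x + t) ^ t` for all `t ≥ 0`. With `x = (n - α)/p + 1` and `t = α/p`, and since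
`n/p + 1 ≤ 2n`, the ratio is at most `(2n) ^ (α/p) ≤ 2 ^ α · n ^ (α/p)`.
-/

namespace Real

theorem Gamma_add_le_Gamma_mul_rpow {x t : ℝ} (hx : 0 < x) (ht₀ : 0 ≤ t) (ht₁ : t ≤ 1) :
    Gamma (x + t) ≤ Gamma x * x ^ t := by
  have hΓx : 0 < Gamma x := Gamma_pos_of_pos hx
  have hconv := convexOn_log_Gamma.2 (Set.mem_Ioi.2 hx) (Set.mem_Ioi.2 (by linarith : 0 < x + 1))
    (by linarith : (0 : ℝ) ≤ 1 - t) ht₀ (by ring)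
  have hmid : (1 - t) • x + t • (x + 1) = x + t := by simp only [smul_eq_mul]; ring
  have hrhs : (1 - t) • log (Gamma x) + t • log (Gamma (x + 1)) = log (Gamma x * x ^ t) := by
    rw [Gamma_add_one hx.ne', log_mul hx.ne' hΓx.ne', log_mul hΓx.ne' (rpow_pos_of_pos hx t).ne',
      log_rpow hx, smul_eq_mul, smul_eq_mul]
    ring
  simp only [Function.comp_apply, hmid, hrhs] at hconv
  exact (log_le_log_iff (Gamma_pos_of_pos (by linarith)) (by positivity)).1 hconv

theorem Gamma_add_le_Gamma_mul_add_rpow {x t : ℝ} (hx : 0 < x) (ht : 0 ≤ t) :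
    Gamma (x + t) ≤ Gamma x * (x + t) ^ t := by
  obtain ⟨k, htk⟩ := exists_nat_ge t
  induction k generalizing t with
  | zero => simp [le_antisymm (by exact_mod_cast htk) ht]
  | succ k ih =>
    rcases le_or_gt t 1 with ht₁ | ht₁
    · calc Gamma (x + t) ≤ Gamma x * x ^ t := Gamma_add_le_Gamma_mul_rpow hx ht ht₁
        _ ≤ Gamma x * (x + t) ^ t := by gcongr; linarith
    · have hy : 0 < x + (t - 1) := by linarith
      calc Gamma (x + t) = (x + (t - 1)) * Gamma (x + (t - 1)) := by
            rw [← Gamma_add_one hy.ne']; ring_nf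
        _ ≤ (x + (t - 1)) * (Gamma x * (x + (t - 1)) ^ (t - 1)) := by
            gcongr
            exact ih (by linarith) (by push_cast at htk; linarith)
        _ = Gamma x * (x + (t - 1)) ^ t := by
            rw [mul_left_comm, mul_comm (x + (t - 1)), ← rpow_add_one hy.ne', sub_add_cancel]
        _ ≤ Gamma x * (x + t) ^ t := by gcongr; linarith

end Real

/-- For every real `α > 0` there exists `C > 0` such that for every real `p ≥ 1` and
every natural number `n` with `n > 2α`, one has
`(n/p)! / ((n-α)/p)! ≤ C · n^(α/p)`, where `x! = Γ(x+1)`. -/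
theorem stmt_0 :
    ∀ α : ℝ, 0 < α → ∃ C : ℝ, 0 < C ∧
      ∀ p : ℝ, 1 ≤ p → ∀ n : ℕ, 2 * α < (n : ℝ) →
        Real.Gamma ((n : ℝ) / p + 1) / Real.Gamma (((n : ℝ) - α) / p + 1) ≤
          C * (n : ℝ) ^ (α / p) := by
  intro α hα
  refine ⟨2 ^ α, by positivity, fun p hp n hn => ?_⟩
  have hp₀ : 0 < p := by linarith
  have hn₁ : (1 : ℝ) ≤ n := by
    have : 0 < n := by exact_mod_cast (by linarith : (0 : ℝ) < n)
    exact_mod_cast this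
  have hx : 0 < ((n : ℝ) - α) / p + 1 := by
    have : 0 ≤ ((n : ℝ) - α) / p := div_nonneg (by linarith) hp₀.le
    linarith
  have hαp : α / p ≤ α := div_le_self hα.le hp
  have hsum : ((n : ℝ) - α) / p + 1 + α / p = n / p + 1 := by field_simp; ring
  have hbase : (n : ℝ) / p + 1 ≤ 2 * n := by linarith [div_le_self (by linarith : (0 : ℝ) ≤ n) hp]
  have hratio := Real.Gamma_add_le_Gamma_mul_add_rpow hx (div_nonneg hα.le hp₀.le)
  rw [hsum] at hratio
  rw [div_le_iff₀ (Real.Gamma_pos_of_pos hx)]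
  calc Real.Gamma (n / p + 1) ≤ Real.Gamma (((n : ℝ) - α) / p + 1) * (n / p + 1) ^ (α / p) :=
        hratio
    _ ≤ Real.Gamma (((n : ℝ) - α) / p + 1) * (2 ^ α * (n : ℝ) ^ (α / p)) := by
        gcongr
        calc ((n : ℝ) / p + 1) ^ (α / p) ≤ (2 * n) ^ (α / p) := by gcongr
          _ = 2 ^ (α / p) * (n : ℝ) ^ (α / p) := Real.mul_rpow (by norm_num) (by linarith)
          _ ≤ 2 ^ α * (n : ℝ) ^ (α / p) := by gcongr; norm_num
    _ = 2 ^ α * (n : ℝ) ^ (α / p) * Real.Gamma (((n : ℝ) - α) / p + 1) := by ring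
end

section
/- For every natural number n ≥ 1, the central binomial coefficient satisfies (2n)! / (n!)² ≤ (e / (√2 · π)) · 4ⁿ / √n. -/
open Real

lemma aux_lb (m : ℕ) : Real.sqrt Real.pi ≤ Stirling.stirlingSeq (m + 1) := by
  have htend : Filter.Tendsto (fun j : ℕ => Stirling.stirlingSeq (j + 1)) Filter.atTop
      (nhds (Real.sqrt Real.pi)) :=
    (Filter.tendsto_add_atTop_iff_nat 1).2 Stirling.tendsto_stirlingSeq_sqrt_pi
  refine le_of_tendsto htend ?_
  filter_upwards [Filter.eventually_ge_atTop m] with j hj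
  exact Stirling.stirlingSeq'_antitone hj

lemma aux_ub (m : ℕ) : Stirling.stirlingSeq (m + 1) ≤ Real.exp 1 / Real.sqrt 2 := by
  rw [← Stirling.stirlingSeq_one]
  exact Stirling.stirlingSeq'_antitone (Nat.zero_le m)

/-- For every `n ≥ 1`, the central binomial coefficient satisfies
`(2n)! / (n!)² ≤ (e / (√2 · π)) · 4ⁿ / √n`. -/
theorem stmt_1 :
    ∀ n : ℕ, 1 ≤ n →
      ((2 * n).factorial : ℝ) / ((n.factorial : ℝ)) ^ 2 ≤
        Real.exp 1 / (Real.sqrt 2 * Real.pi) * 4 ^ n / Real.sqrt n := by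
  intro n hn
  have hn0 : (0:ℝ) < n := by exact_mod_cast hn
  have he : (0:ℝ) < Real.exp 1 := Real.exp_pos 1
  have hs2 : (0:ℝ) < Real.sqrt 2 := by positivity
  have hπ : (0:ℝ) < Real.pi := Real.pi_pos
  have hsn : (0:ℝ) < Real.sqrt n := Real.sqrt_pos.2 hn0
  have hcast : ((2 * n : ℕ) : ℝ) = 2 * (n : ℝ) := by push_cast; ring
  have hdn : (0:ℝ) < Real.sqrt (2 * n) * ((n : ℝ) / Real.exp 1) ^ n := by positivity
  have hd2n : (0:ℝ) < Real.sqrt (2 * (2 * n : ℕ)) * (((2 * n : ℕ) : ℝ) / Real.exp 1) ^ (2 * n) := by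
    rw [hcast]; positivity
  have hfact : (n.factorial : ℝ) =
      Stirling.stirlingSeq n * (Real.sqrt (2 * n) * ((n : ℝ) / Real.exp 1) ^ n) := by
    rw [Stirling.stirlingSeq, div_mul_cancel₀ _ hdn.ne']
  have hfact2 : ((2 * n).factorial : ℝ) = Stirling.stirlingSeq (2 * n) *
      (Real.sqrt (2 * (2 * n : ℕ)) * (((2 * n : ℕ) : ℝ) / Real.exp 1) ^ (2 * n)) := by
    rw [Stirling.stirlingSeq, div_mul_cancel₀ _ hd2n.ne']
  have hub : Stirling.stirlingSeq (2 * n) ≤ Real.exp 1 / Real.sqrt 2 := by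
    have h2n : 2 * n = (2 * n - 1) + 1 := by omega
    rw [h2n]; exact aux_ub _
  have hlb : Real.sqrt Real.pi ≤ Stirling.stirlingSeq n := by
    have hn' : n = (n - 1) + 1 := by omega
    rw [hn']; exact aux_lb _
  have hbpos : (0:ℝ) < Stirling.stirlingSeq n := lt_of_lt_of_le (by positivity) hlb
  have hapos : (0:ℝ) < Stirling.stirlingSeq (2 * n) := by
    have h2n : 2 * n = (2 * n - 1) + 1 := by omega
    rw [h2n]; exact Stirling.stirlingSeq'_pos _
  have hsq : Real.sqrt (2 * ((2 * n : ℕ) : ℝ)) = 2 * Real.sqrt n := by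
    rw [hcast, show (2 : ℝ) * (2 * (n:ℝ)) = 2 ^ 2 * (n:ℝ) by ring,
      Real.sqrt_mul (by positivity), Real.sqrt_sq (by norm_num)]
  have hpow : (((2 * n : ℕ) : ℝ) / Real.exp 1) ^ (2 * n) =
      4 ^ n * (((n : ℝ) / Real.exp 1) ^ n) ^ 2 := by
    rw [hcast, show (2 : ℝ) * (n:ℝ) / Real.exp 1 = 2 * ((n:ℝ) / Real.exp 1) by ring, mul_pow,
      pow_mul, mul_comm 2 n, pow_mul ((n:ℝ) / Real.exp 1)]
    norm_num
  have hsn2 : Real.sqrt (2 * n) ^ 2 = 2 * (n : ℝ) := Real.sq_sqrt (by positivity)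
  have h2 : Real.sqrt n ^ 2 = (n : ℝ) := Real.sq_sqrt hn0.le
  have hkey : ((2 * n).factorial : ℝ) / ((n.factorial : ℝ)) ^ 2 =
      Stirling.stirlingSeq (2 * n) / Stirling.stirlingSeq n ^ 2 * (4 ^ n / Real.sqrt n) := by
    rw [hfact, hfact2, hsq, hpow, mul_pow, mul_pow, hsn2]
    have h1 : ((n : ℝ) / Real.exp 1) ^ n ≠ 0 := by positivity
    field_simp
    rw [← h2]
    ring_nf
    rw [Real.sqrt_sq hsn.le]
  rw [hkey]
  have hπle : Real.pi ≤ Stirling.stirlingSeq n ^ 2 := by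
    calc Real.pi = Real.sqrt Real.pi ^ 2 := (Real.sq_sqrt hπ.le).symm
    _ ≤ _ := by gcongr
  have hcoef : Stirling.stirlingSeq (2 * n) / Stirling.stirlingSeq n ^ 2 ≤
      Real.exp 1 / (Real.sqrt 2 * Real.pi) := by
    rw [div_le_div_iff₀ (by positivity) (by positivity)]
    calc Stirling.stirlingSeq (2 * n) * (Real.sqrt 2 * Real.pi)
        ≤ (Real.exp 1 / Real.sqrt 2) * (Real.sqrt 2 * Real.pi) := by gcongr
      _ = Real.exp 1 * Real.pi := by field_simp
      _ ≤ Real.exp 1 * Stirling.stirlingSeq n ^ 2 := by gcongr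
  calc Stirling.stirlingSeq (2 * n) / Stirling.stirlingSeq n ^ 2 * (4 ^ n / Real.sqrt n)
      ≤ Real.exp 1 / (Real.sqrt 2 * Real.pi) * (4 ^ n / Real.sqrt n) := by gcongr
    _ = Real.exp 1 / (Real.sqrt 2 * Real.pi) * 4 ^ n / Real.sqrt n := by ring
end

section
/- Let b, c > 0 and θ ∈ (0, π), and let a ≥ 0 be a real number satisfying cosh a = cosh b · cosh c − sinh b · sinh c · cos θ. Then a ≥ b + c − log(2 / (1 − cos θ)). -/
open Real

/-- In a hyperbolic triangle with sides `a, b, c` and angle `θ` opposite `a`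
(related by the first hyperbolic law of cosines), one has
`a ≥ b + c − log(2 / (1 − cos θ))`. -/
theorem stmt_2 (b c θ a : ℝ) (hb : 0 < b) (hc : 0 < c)
    (hθ₀ : 0 < θ) (hθπ : θ < Real.pi) (ha : 0 ≤ a)
    (hcos : Real.cosh a = Real.cosh b * Real.cosh c - Real.sinh b * Real.sinh c * Real.cos θ) :
    a ≥ b + c - Real.log (2 / (1 - Real.cos θ)) := by
  have hcos1 : Real.cos θ < 1 := by
    have h := Real.cos_lt_cos_of_nonneg_of_le_pi (le_refl 0) hθπ.le hθ₀
    simpa using h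
  have hcosm1 : -1 < Real.cos θ := by
    have h := Real.cos_lt_cos_of_nonneg_of_le_pi hθ₀.le (le_refl Real.pi) hθπ
    simpa using h
  set t : ℝ := (1 - Real.cos θ) / 2 with ht
  have ht0 : 0 < t := by rw [ht]; linarith
  have ht1 : t < 1 := by rw [ht]; linarith
  have hlog : Real.log (2 / (1 - Real.cos θ)) = - Real.log t := by
    rw [ht]
    rw [show (2 : ℝ) / (1 - Real.cos θ) = ((1 - Real.cos θ) / 2)⁻¹ by
      field_simp]
    rw [Real.log_inv]
  rw [hlog]
  -- goal : a ≥ b + c + log t  (after arithmetic)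
  have key : Real.cosh a = t * Real.cosh (b + c) + (1 - t) * Real.cosh (b - c) := by
    rw [hcos, Real.cosh_add, Real.cosh_sub, ht]; ring
  have hE : (0 : ℝ) < Real.exp (b + c) := Real.exp_pos _
  by_cases hcase : t * Real.exp (b + c) ≤ 1
  · have h1 : Real.log t + (b + c) ≤ 0 := by
      have h2 : Real.log (t * Real.exp (b + c)) ≤ 0 :=
        Real.log_nonpos (by positivity) hcase
      rwa [Real.log_mul (ne_of_gt ht0) (ne_of_gt hE), Real.log_exp] at h2
    linarith
  · push_neg at hcase
    have hsinh : 0 ≤ Real.sinh a := Real.sinh_nonneg_iff.mpr ha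
    have hexp : Real.exp a = Real.cosh a + Real.sinh a := (Real.cosh_add_sinh a).symm
    have hD : 1 ≤ Real.cosh (b - c) := Real.one_le_cosh _
    have hC : 2 * Real.cosh (b + c) * Real.exp (b + c) = Real.exp (b + c) ^ 2 + 1 := by
      rw [Real.cosh_eq, Real.exp_neg]
      field_simp
    have hmain : t * Real.exp (b + c) ≤ Real.exp a := by
      rcases le_or_gt (t * Real.exp (b + c)) (Real.cosh a) with h | h
      · linarith
      · have hid : Real.cosh a ^ 2 - Real.sinh a ^ 2 = 1 := Real.cosh_sq_sub_sinh_sq a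
        have hED : 1 ≤ t * Real.exp (b + c) * Real.cosh (b - c) := by
          nlinarith [hcase, hD, mul_pos ht0 hE]
        have h2 : 0 ≤ t ^ 2 - 1 +
            2 * t * (1 - t) * (Real.exp (b + c) * Real.cosh (b - c)) := by
          nlinarith [mul_nonneg (sub_nonneg.mpr ht1.le) (sub_nonneg.mpr hED),
            sq_nonneg (1 - t)]
        have hfinal : Real.sinh a ^ 2 - (t * Real.exp (b + c) - Real.cosh a) ^ 2 =
            t ^ 2 - 1 + 2 * t * (1 - t) * (Real.exp (b + c) * Real.cosh (b - c)) := by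
          linear_combination (2 * t * Real.exp (b + c)) * key + t ^ 2 * hC - hid
        have hsq : (t * Real.exp (b + c) - Real.cosh a) ^ 2 ≤ Real.sinh a ^ 2 := by
          linarith [hfinal, h2]
        nlinarith [hsq, hsinh, h]
    have hloga : Real.log (t * Real.exp (b + c)) ≤ a := by
      calc Real.log (t * Real.exp (b + c)) ≤ Real.log (Real.exp a) :=
            Real.log_le_log (by positivity) hmain
        _ = a := Real.log_exp a
    rw [Real.log_mul (ne_of_gt ht0) (ne_of_gt hE), Real.log_exp] at hloga
    linarith
end

section
/- Let b, c > 0 and r ∈ [−1, 1]. Suppose a : (0, ∞) → [0, ∞) satisfies cosh(a(λ)) = cosh(λb) · cosh(λc) − r · sinh(λb) · sinh(λc) for all λ > 0. Then the function λ ↦ λb + λc − a(λ) is monotone nondecreasing on (0, ∞). -/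
set_option maxHeartbeats 1000000


open Real

/-- Monotonicity of the hyperbolic triangle defect: if `a(λ)` is the side of the
hyperbolic triangle with adjacent sides `λb, λc` and included angle `arccos r`,
then `λ ↦ λb + λc − a(λ)` is monotone nondecreasing on `(0, ∞)`. -/
theorem stmt_3 (b c r : ℝ) (hb : 0 < b) (hc : 0 < c)
    (hr₁ : -1 ≤ r) (hr₂ : r ≤ 1) (a : ℝ → ℝ)
    (ha_nonneg : ∀ l : ℝ, 0 < l → 0 ≤ a l)
    (ha : ∀ l : ℝ, 0 < l →
      Real.cosh (a l) = Real.cosh (l * b) * Real.cosh (l * c)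
        - r * (Real.sinh (l * b) * Real.sinh (l * c))) :
    MonotoneOn (fun l : ℝ => l * b + l * c - a l) (Set.Ioi 0) := by
  intro x hx y hy hxy
  simp only [Set.mem_Ioi] at hx hy
  set p : ℝ := (1 - r) / 2 with hp
  set q : ℝ := (1 + r) / 2 with hq
  have hp0 : 0 ≤ p := by simp [hp]; linarith
  have hq0 : 0 ≤ q := by simp [hq]; linarith
  have hd : |b - c| ≤ b + c := abs_le.mpr ⟨by linarith, by linarith⟩
  have hd0 : 0 ≤ |b - c| := abs_nonneg _
  have hΔ : 0 ≤ y - x := by linarith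
  -- decomposition of cosh (a l)
  have hdec : ∀ l : ℝ, 0 < l →
      Real.cosh (a l) = p * Real.cosh (l * (b + c)) + q * Real.cosh (l * (b - c)) := by
    intro l hl
    rw [ha l hl, mul_add, mul_sub, Real.cosh_add, Real.cosh_sub, hp, hq]
    ring
  -- sinh lower bound at x
  have hxabs : |Real.sinh (x * (b - c))| = Real.sinh (x * |b - c|) := by
    rw [Real.abs_sinh, abs_mul, abs_of_pos hx]
  have hSsq : Real.sinh (a x) ^ 2 = Real.cosh (a x) ^ 2 - 1 := Real.sinh_sq _
  have hcc : Real.cosh (x * |b - c|) = Real.cosh (x * (b - c)) := by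
    rw [← Real.cosh_abs (x * (b - c)), abs_mul, abs_of_pos hx]
  have hcos1 : (1 : ℝ) ≤ Real.cosh (x * (b + c)) * Real.cosh (x * |b - c|)
      - Real.sinh (x * (b + c)) * Real.sinh (x * |b - c|) := by
    rw [← Real.cosh_sub]; exact Real.one_le_cosh _
  have hS0 : 0 ≤ Real.sinh (a x) := Real.sinh_nonneg_iff.mpr (ha_nonneg x hx)
  have hT0 : 0 ≤ p * Real.sinh (x * (b + c)) + q * Real.sinh (x * |b - c|) := by
    have h1 : 0 ≤ Real.sinh (x * (b + c)) :=
      Real.sinh_nonneg_iff.mpr (by positivity)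
    have h2 : 0 ≤ Real.sinh (x * |b - c|) :=
      Real.sinh_nonneg_iff.mpr (by positivity)
    positivity
  have hSge : p * Real.sinh (x * (b + c)) + q * Real.sinh (x * |b - c|)
      ≤ Real.sinh (a x) := by
    have hTsq : (p * Real.sinh (x * (b + c)) + q * Real.sinh (x * |b - c|)) ^ 2
        ≤ Real.sinh (a x) ^ 2 := by
      rw [hSsq, hdec x hx]
      have e1 : Real.sinh (x * (b + c)) ^ 2 = Real.cosh (x * (b + c)) ^ 2 - 1 :=
        Real.sinh_sq _
      have e2 : Real.sinh (x * |b - c|) ^ 2 = Real.cosh (x * |b - c|) ^ 2 - 1 :=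
        Real.sinh_sq _
      rw [← hcc]
      have hpq2 : p ^ 2 + 2 * p * q + q ^ 2 = 1 := by rw [hp, hq]; ring
      have f1 : p ^ 2 * Real.sinh (x * (b + c)) ^ 2
          = p ^ 2 * (Real.cosh (x * (b + c)) ^ 2 - 1) := by rw [e1]
      have f2 : q ^ 2 * Real.sinh (x * |b - c|) ^ 2
          = q ^ 2 * (Real.cosh (x * |b - c|) ^ 2 - 1) := by rw [e2]
      have f3 := mul_le_mul_of_nonneg_left hcos1
        (by positivity : (0:ℝ) ≤ 2 * p * q)
      nlinarith [f1, f2, f3, hpq2]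
    nlinarith [hS0, hT0, hTsq]
  -- key inequality
  have key : Real.cosh (a y) ≤ Real.cosh (a x + (y - x) * (b + c)) := by
    rw [Real.cosh_add, hdec x hx, hdec y hy]
    have ey1 : y * (b + c) = x * (b + c) + (y - x) * (b + c) := by ring
    have ey2 : y * (b - c) = x * (b - c) + (y - x) * (b - c) := by ring
    rw [ey1, ey2, Real.cosh_add, Real.cosh_add]
    -- abbreviations
    have hGE : Real.cosh ((y - x) * (b - c)) ≤ Real.cosh ((y - x) * (b + c)) := by
      apply Real.cosh_le_cosh.mpr
      rw [abs_mul, abs_of_nonneg hΔ, abs_of_nonneg (by positivity : (0:ℝ) ≤ (y - x) * (b + c))]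
      exact mul_le_mul_of_nonneg_left hd hΔ
    have hF0 : 0 ≤ Real.sinh ((y - x) * (b + c)) :=
      Real.sinh_nonneg_iff.mpr (by positivity)
    have hDH : Real.sinh (x * (b - c)) * Real.sinh ((y - x) * (b - c))
        ≤ Real.sinh (x * |b - c|) * Real.sinh ((y - x) * (b + c)) := by
      calc Real.sinh (x * (b - c)) * Real.sinh ((y - x) * (b - c))
          ≤ |Real.sinh (x * (b - c)) * Real.sinh ((y - x) * (b - c))| := le_abs_self _
        _ = |Real.sinh (x * (b - c))| * |Real.sinh ((y - x) * (b - c))| := abs_mul _ _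
        _ ≤ Real.sinh (x * |b - c|) * Real.sinh ((y - x) * (b + c)) := by
            rw [hxabs]
            apply mul_le_mul_of_nonneg_left _ (by
              rw [← hxabs]; exact abs_nonneg _)
            rw [Real.abs_sinh]
            apply Real.sinh_le_sinh.mpr
            rw [abs_mul, abs_of_nonneg hΔ]
            exact mul_le_mul_of_nonneg_left hd hΔ
    have hC1 : (1 : ℝ) ≤ Real.cosh (x * (b - c)) := Real.one_le_cosh _
    have h1 := mul_le_mul_of_nonneg_left hGE
      (mul_nonneg hq0 (by linarith : (0:ℝ) ≤ Real.cosh (x * (b - c))))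
    have h2 := mul_le_mul_of_nonneg_left hDH hq0
    have h3 := mul_le_mul_of_nonneg_left hSge hF0
    linarith [h1, h2, h3]
  -- conclude
  have habs : |a y| ≤ |a x + (y - x) * (b + c)| := Real.cosh_le_cosh.mp key
  have h0 : 0 ≤ a x + (y - x) * (b + c) := by
    have := ha_nonneg x hx
    nlinarith
  rw [abs_of_nonneg (ha_nonneg y hy), abs_of_nonneg h0] at habs
  simp only
  linarith
end

section
/- Let b, c ≥ 0, r ∈ [−1, 1], and B, C ≥ 0. Then b·(sinh B · cosh C − r · cosh B · sinh C) + c·(cosh B · sinh C − r · sinh B · cosh C) ≤ (b + c) · √((cosh B · cosh C − r · sinh B · sinh C)² − 1). -/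
open Real

lemma aux_le_sqrt (x y : ℝ) (h : x ^ 2 ≤ y) : x ≤ Real.sqrt y := by
  calc x ≤ |x| := le_abs_self x
    _ = Real.sqrt (x ^ 2) := (Real.sqrt_sq_eq_abs x).symm
    _ ≤ Real.sqrt y := Real.sqrt_le_sqrt h

/-- The derivative comparison in the hyperbolic triangle estimate:
`b(sinh B cosh C − r cosh B sinh C) + c(cosh B sinh C − r sinh B cosh C)
  ≤ (b + c)·√((cosh B cosh C − r sinh B sinh C)² − 1)`. -/
theorem stmt_4 (b c r B C : ℝ) (hb : 0 ≤ b) (hc : 0 ≤ c)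
    (hr₁ : -1 ≤ r) (hr₂ : r ≤ 1) (hB : 0 ≤ B) (hC : 0 ≤ C) :
    b * (Real.sinh B * Real.cosh C - r * (Real.cosh B * Real.sinh C))
      + c * (Real.cosh B * Real.sinh C - r * (Real.sinh B * Real.cosh C)) ≤
    (b + c) *
      Real.sqrt ((Real.cosh B * Real.cosh C - r * (Real.sinh B * Real.sinh C)) ^ 2 - 1) := by
  set s := Real.sinh B
  set S := Real.cosh B
  set t := Real.sinh C
  set T := Real.cosh C
  have hS : S ^ 2 - s ^ 2 = 1 := by
    simpa [S, s, sq] using Real.cosh_sq_sub_sinh_sq B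
  have hT : T ^ 2 - t ^ 2 = 1 := by
    simpa [T, t, sq] using Real.cosh_sq_sub_sinh_sq C
  have hr2 : r ^ 2 ≤ 1 := by nlinarith
  have h1 : s * T - r * (S * t) ≤
      Real.sqrt ((S * T - r * (s * t)) ^ 2 - 1) := by
    apply aux_le_sqrt
    nlinarith [sq_nonneg t, mul_nonneg (sq_nonneg t) (sub_nonneg.2 hr2)]
  have h2 : S * t - r * (s * T) ≤
      Real.sqrt ((S * T - r * (s * t)) ^ 2 - 1) := by
    apply aux_le_sqrt
    nlinarith [sq_nonneg s, mul_nonneg (sq_nonneg s) (sub_nonneg.2 hr2)]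
  calc b * (s * T - r * (S * t)) + c * (S * t - r * (s * T))
      ≤ b * Real.sqrt ((S * T - r * (s * t)) ^ 2 - 1)
        + c * Real.sqrt ((S * T - r * (s * t)) ^ 2 - 1) := by
        gcongr
    _ = (b + c) * Real.sqrt ((S * T - r * (s * t)) ^ 2 - 1) := by ring
end

section
/- Let b, c ≥ 0, B, C ≥ 0, and r ∈ [−1, 1]. Then 2bc(1+r) · sinh²B · sinh²C + (c²(1−r) + 2bc) · sinh²B + (b²(1−r) + 2bc) · sinh²C ≥ 2bc(1+r) · sinh B · cosh B · sinh C · cosh C. -/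
open Real

/-- The key algebraic inequality `(Y² − X²)/(1+r) ≥ 0` in the hyperbolic triangle
derivative comparison. -/
theorem stmt_5 (b c B C r : ℝ) (hb : 0 ≤ b) (hc : 0 ≤ c)
    (hB : 0 ≤ B) (hC : 0 ≤ C) (hr₁ : -1 ≤ r) (hr₂ : r ≤ 1) :
    2 * b * c * (1 + r) * Real.sinh B ^ 2 * Real.sinh C ^ 2
      + (c ^ 2 * (1 - r) + 2 * b * c) * Real.sinh B ^ 2
      + (b ^ 2 * (1 - r) + 2 * b * c) * Real.sinh C ^ 2 ≥
    2 * b * c * (1 + r) * Real.sinh B * Real.cosh B * Real.sinh C * Real.cosh C := by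
  have hsB : 0 ≤ Real.sinh B := Real.sinh_nonneg_iff.2 hB
  have hsC : 0 ≤ Real.sinh C := Real.sinh_nonneg_iff.2 hC
  have hcB : Real.cosh B ^ 2 = Real.sinh B ^ 2 + 1 := Real.cosh_sq B
  have hcC : Real.cosh C ^ 2 = Real.sinh C ^ 2 + 1 := Real.cosh_sq C
  nlinarith [sq_nonneg (Real.sinh B * Real.cosh C - Real.sinh C * Real.cosh B),
    mul_nonneg hb hc, mul_nonneg (mul_nonneg hc hc) (sq_nonneg (Real.sinh B)),
    mul_nonneg (mul_nonneg hb hb) (sq_nonneg (Real.sinh C)),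
    mul_nonneg (mul_nonneg hb hc) (sq_nonneg (Real.sinh B)),
    mul_nonneg (mul_nonneg hb hc) (sq_nonneg (Real.sinh C)),
    mul_nonneg (mul_nonneg hb hc) (sq_nonneg (Real.sinh B * Real.cosh C - Real.sinh C * Real.cosh B)),
    mul_nonneg (mul_nonneg (mul_nonneg hb hc) (sub_nonneg.2 hr₂)) (sq_nonneg (Real.sinh B * Real.cosh C - Real.sinh C * Real.cosh B)), mul_nonneg (mul_nonneg (mul_nonneg hb hc) (by linarith : (0:ℝ) ≤ 1 + r)) (sq_nonneg (Real.sinh B * Real.cosh C - Real.sinh C * Real.cosh B)), mul_nonneg (mul_nonneg (mul_nonneg hc hc) (sub_nonneg.2 hr₂)) (sq_nonneg (Real.sinh B)), mul_nonneg (mul_nonneg (mul_nonneg hb hb) (sub_nonneg.2 hr₂)) (sq_nonneg (Real.sinh C)), mul_nonneg (mul_nonneg (mul_nonneg hb hc) (sub_nonneg.2 hr₂)) (sq_nonneg (Real.sinh B)), mul_nonneg (mul_nonneg (mul_nonneg hb hc) (sub_nonneg.2 hr₂)) (sq_nonneg (Real.sinh C))]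
end

section
/- Let a : ℕ → [0, ∞) be defined for n ≥ 1 and satisfy the shuffle-type estimate a(k)ⁿ ≤ ((nk)! / (k!)ⁿ) · a(nk) for all integers n, k ≥ 1. Then sup_{k ≥ 1} (k! · a(k))^{1/k} = limsup_{n→∞} (n! · a(n))^{1/n}, as an identity in the extended nonnegative reals [0, ∞]. -/
open Filter ENNReal

/-!
If `f k ≤ f (n * k)` for all `n, k ≥ 1`, each `f k` is dominated by `f` along the multiples
of `k`, hence by the limsup; the converse bound is automatic.
Multiplying the shuffle estimate by `(k!)ⁿ` gives `(k! a(k))ⁿ ≤ (nk)! a(nk)`, and taking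
`nk`-th roots shows that `f n = (n! a(n))^{1/n}` has this property.
-/

theorem iSup_one_le_eq_limsup_of_le_mul {α : Type*} [CompleteLattice α] {f : ℕ → α}
    (hf : ∀ n k : ℕ, 1 ≤ n → 1 ≤ k → f k ≤ f (n * k)) :
    ⨆ k, ⨆ _ : 1 ≤ k, f k = limsup f atTop := by
  apply le_antisymm
  · refine iSup₂_le fun k hk => le_limsup_of_frequently_le ?_
    refine frequently_atTop.2 fun N => ⟨(N + 1) * k, ?_, hf (N + 1) k N.succ_pos hk⟩
    exact N.le_succ.trans (Nat.le_mul_of_pos_right _ hk)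
  · refine limsup_le_of_le (by isBoundedDefault) ?_
    filter_upwards [eventually_ge_atTop 1] with n hn
      using le_iSup₂ (f := fun k (_ : 1 ≤ k) => f k) n hn

theorem ENNReal.mul_pow_le_of_pow_le_div_pow_mul {x y c d : ℝ≥0∞} {n : ℕ} (hd₀ : d ≠ 0)
    (hd : d ≠ ∞) (h : x ^ n ≤ c / d ^ n * y) : (d * x) ^ n ≤ c * y := calc
  (d * x) ^ n = d ^ n * x ^ n := mul_pow d x n
  _ ≤ d ^ n * (c / d ^ n * y) := by gcongr
  _ = c * y := by
    rw [← mul_assoc, ENNReal.mul_div_cancel' (fun h => absurd (pow_eq_zero_iff'.1 h).1 hd₀)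
      (fun h => absurd h (pow_ne_top hd))]

theorem ENNReal.rpow_one_div_le_rpow_one_div_mul {x y : ℝ≥0∞} {n k : ℕ} (hn : n ≠ 0)
    (h : x ^ n ≤ y) : x ^ (1 / (k : ℝ)) ≤ y ^ (1 / ((n * k : ℕ) : ℝ)) := calc
  x ^ (1 / (k : ℝ)) = (x ^ n) ^ (1 / ((n * k : ℕ) : ℝ)) := by
    rw [← rpow_natCast, ← rpow_mul, Nat.cast_mul, mul_one_div,
      div_mul_cancel_left₀ (Nat.cast_ne_zero.2 hn), one_div]
  _ ≤ y ^ (1 / ((n * k : ℕ) : ℝ)) := rpow_le_rpow h (by positivity)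

/-- For a nonnegative sequence satisfying the shuffle-type estimate
`a(k)ⁿ ≤ ((nk)!/(k!)ⁿ)·a(nk)`, the supremum over `k ≥ 1` of `(k!·a(k))^{1/k}`
equals the limsup as `n → ∞` of `(n!·a(n))^{1/n}`, in `[0, ∞]`. -/
theorem stmt_6 (a : ℕ → NNReal)
    (ha : ∀ n k : ℕ, 1 ≤ n → 1 ≤ k →
      (a k : ℝ≥0∞) ^ n ≤
        ((n * k).factorial : ℝ≥0∞) / ((k.factorial : ℝ≥0∞)) ^ n * (a (n * k) : ℝ≥0∞)) :
    (⨆ k : ℕ, ⨆ _ : 1 ≤ k, ((k.factorial : ℝ≥0∞) * (a k : ℝ≥0∞)) ^ (1 / (k : ℝ))) =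
      Filter.limsup
        (fun n : ℕ => ((n.factorial : ℝ≥0∞) * (a n : ℝ≥0∞)) ^ (1 / (n : ℝ)))
        Filter.atTop := by
  refine iSup_one_le_eq_limsup_of_le_mul fun n k hn hk => ?_
  refine rpow_one_div_le_rpow_one_div_mul (by omega) ?_
  exact mul_pow_le_of_pow_le_div_pow_mul (by simp [Nat.factorial_ne_zero]) (natCast_ne_top _)
    (ha n k hn hk)
end

section
/- Let a : ℕ → [0, ∞) satisfy a(0) = 1 and sup_{n ≥ 1} (n! · a(n))^{1/n} < ∞. Then the series h(λ) = Σ_{n=0}^{∞} a(n) · λ^{2n} converges for every λ > 0, and limsup_{λ→∞} (1/λ²) · log h(λ) ≤ limsup_{n→∞} (n! · a(n))^{1/n}. -/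
open Filter Real

private lemma aux_pow {x : ℝ} (hx : 0 ≤ x) {n : ℕ} (hn : 1 ≤ n) {c : ℝ}
    (h : x ^ (1 / (n : ℝ)) ≤ c) : x ≤ c ^ n := by
  have h2 := pow_le_pow_left₀ (Real.rpow_nonneg hx _) h n
  rwa [one_div, Real.rpow_inv_natCast_pow hx (by omega)] at h2

private lemma aux_key {a : ℕ → ℝ} (ha : ∀ n, 0 ≤ a n) {c : ℝ} (hc : 0 < c) {N : ℕ}
    (hN : ∀ n, N ≤ n → (n.factorial : ℝ) * a n ≤ c ^ n) :
    ∃ D : ℝ, 1 ≤ D ∧ ∀ n, (n.factorial : ℝ) * a n ≤ D * c ^ n := by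
  have hsum0 : 0 ≤ ∑ k ∈ Finset.range N, (k.factorial : ℝ) * a k / c ^ k :=
    Finset.sum_nonneg fun k _ => div_nonneg (mul_nonneg (Nat.cast_nonneg _) (ha k))
      (pow_nonneg hc.le k)
  refine ⟨1 + ∑ k ∈ Finset.range N, (k.factorial : ℝ) * a k / c ^ k, by linarith, fun n => ?_⟩
  have hcn : (0:ℝ) < c ^ n := pow_pos hc n
  rcases le_or_gt N n with h | h
  · have := hN n h
    nlinarith
  · have h1 : (n.factorial : ℝ) * a n / c ^ n ≤
        ∑ k ∈ Finset.range N, (k.factorial : ℝ) * a k / c ^ k :=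
      Finset.single_le_sum (f := fun k => (k.factorial : ℝ) * a k / c ^ k)
        (fun k _ => div_nonneg (mul_nonneg (Nat.cast_nonneg _) (ha k)) (pow_nonneg hc.le k))
        (Finset.mem_range.2 h)
    rw [div_le_iff₀ hcn] at h1
    nlinarith

private lemma aux_key2 {a : ℕ → ℝ} (ha : ∀ n, 0 ≤ a n) {c D : ℝ} (hc : 0 < c)
    (hD : 1 ≤ D) (h : ∀ n, (n.factorial : ℝ) * a n ≤ D * c ^ n) (l : ℝ) :
    Summable (fun n : ℕ => a n * l ^ (2 * n)) ∧
      ∑' n : ℕ, a n * l ^ (2 * n) ≤ D * Real.exp (c * l ^ 2) := by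
  have hterm : ∀ n : ℕ, a n * l ^ (2 * n) ≤ D * (c * l ^ 2) ^ n / n.factorial := by
    intro n
    have hfac : (0:ℝ) < n.factorial := by exact_mod_cast n.factorial_pos
    have ha' : a n ≤ D * c ^ n / n.factorial := by
      rw [le_div_iff₀ hfac]; nlinarith [h n]
    have hl2 : (0:ℝ) ≤ (l ^ 2) ^ n := pow_nonneg (sq_nonneg l) n
    calc a n * l ^ (2 * n) = a n * (l ^ 2) ^ n := by rw [← pow_mul]
      _ ≤ (D * c ^ n / n.factorial) * (l ^ 2) ^ n := mul_le_mul_of_nonneg_right ha' hl2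
      _ = D * (c * l ^ 2) ^ n / n.factorial := by rw [mul_pow]; ring
  have hsum : Summable fun n : ℕ => D * (c * l ^ 2) ^ n / n.factorial := by
    simpa [mul_div_assoc] using (Real.summable_pow_div_factorial (c * l ^ 2)).mul_left D
  have hS : Summable (fun n : ℕ => a n * l ^ (2 * n)) := by
    refine hsum.of_nonneg_of_le (fun n => mul_nonneg (ha n) ?_) hterm
    rw [pow_mul]; exact pow_nonneg (sq_nonneg l) n
  refine ⟨hS, ?_⟩
  calc ∑' n : ℕ, a n * l ^ (2 * n) ≤ ∑' n : ℕ, D * (c * l ^ 2) ^ n / n.factorial :=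
        Summable.tsum_le_tsum hterm hS hsum
    _ = D * Real.exp (c * l ^ 2) := by
        rw [Real.exp_eq_exp_ℝ, NormedSpace.exp_eq_tsum_div, ← tsum_mul_left]
        simp [mul_div_assoc]

/-- If `a(0) = 1`, `a(n) ≥ 0` and `sup_{n≥1} (n!·a(n))^{1/n} < ∞`, then
`h(λ) = Σ a(n) λ^{2n}` converges for every `λ > 0` and
`limsup_{λ→∞} λ⁻² log h(λ) ≤ limsup_{n→∞} (n!·a(n))^{1/n}`. -/
theorem stmt_10 (a : ℕ → ℝ) (ha_nonneg : ∀ n, 0 ≤ a n) (ha0 : a 0 = 1)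
    (ha_sup : ∃ M : ℝ, ∀ n : ℕ, 1 ≤ n → ((n.factorial : ℝ) * a n) ^ (1 / (n : ℝ)) ≤ M) :
    (∀ l : ℝ, 0 < l → Summable (fun n : ℕ => a n * l ^ (2 * n))) ∧
      Filter.limsup
          (fun l : ℝ => 1 / l ^ 2 * Real.log (∑' n : ℕ, a n * l ^ (2 * n)))
          Filter.atTop ≤
        Filter.limsup
          (fun n : ℕ => ((n.factorial : ℝ) * a n) ^ (1 / (n : ℝ)))
          Filter.atTop := by
  obtain ⟨M, hM⟩ := ha_sup
  set g : ℕ → ℝ := fun n => ((n.factorial : ℝ) * a n) ^ (1 / (n : ℝ)) with hg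
  have han : ∀ n, 0 ≤ (n.factorial : ℝ) * a n :=
    fun n => mul_nonneg (Nat.cast_nonneg _) (ha_nonneg n)
  have hg0 : ∀ n, 0 ≤ g n := fun n => Real.rpow_nonneg (han n) _
  -- summability for every l (in fact all real l)
  have hsummable : ∀ l : ℝ, Summable (fun n : ℕ => a n * l ^ (2 * n)) := by
    intro l
    have hc1 : (0:ℝ) < max M 1 := lt_of_lt_of_le one_pos (le_max_right _ _)
    have hN1 : ∀ n, 1 ≤ n → (n.factorial : ℝ) * a n ≤ (max M 1) ^ n := fun n hn =>
      aux_pow (han n) hn ((hM n hn).trans (le_max_left _ _))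
    obtain ⟨D, hD, hDn⟩ := aux_key ha_nonneg hc1 hN1
    exact (aux_key2 ha_nonneg hc1 hD hDn l).1
  -- boundedness facts about g
  have hbdd : IsBoundedUnder (· ≤ ·) atTop g :=
    ⟨M, eventually_map.2 (eventually_atTop.2 ⟨1, fun n hn => hM n hn⟩)⟩
  set L := limsup g atTop with hL
  have hL0 : 0 ≤ L :=
    le_limsup_of_frequently_le (Frequently.of_forall hg0) hbdd
  refine ⟨fun l _ => hsummable l, ?_⟩
  -- coboundedness of the lhs function
  have hpos : ∀ l : ℝ, 1 ≤ l → (1:ℝ) ≤ ∑' n : ℕ, a n * l ^ (2 * n) := by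
    intro l hl
    have := Summable.le_tsum (hsummable l) 0 (fun j _ => by
      have : (0:ℝ) ≤ l ^ (2 * j) := by rw [pow_mul]; exact pow_nonneg (sq_nonneg l) j
      exact mul_nonneg (ha_nonneg j) this)
    simpa [ha0] using this
  have hf0 : ∀ᶠ l : ℝ in atTop,
      0 ≤ 1 / l ^ 2 * Real.log (∑' n : ℕ, a n * l ^ (2 * n)) := by
    filter_upwards [eventually_ge_atTop (1:ℝ)] with l hl
    exact mul_nonneg (by positivity) (Real.log_nonneg (hpos l hl))
  have hcob : IsCoboundedUnder (· ≤ ·) atTop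
      (fun l : ℝ => 1 / l ^ 2 * Real.log (∑' n : ℕ, a n * l ^ (2 * n))) :=
    isCoboundedUnder_le_of_eventually_le atTop hf0
  refine le_of_forall_pos_le_add fun ε hε => ?_
  set c := L + ε / 2 with hcdef
  have hc : 0 < c := by positivity
  -- eventual bound on g gives factorial bound
  have hev : ∀ᶠ n in atTop, g n < c :=
    eventually_lt_of_limsup_lt (by rw [← hL, hcdef]; linarith) hbdd
  obtain ⟨N, hNn⟩ := eventually_atTop.1 hev
  have hN : ∀ n, max N 1 ≤ n → (n.factorial : ℝ) * a n ≤ c ^ n := fun n hn =>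
    aux_pow (han n) (le_trans (le_max_right _ _) hn)
      (le_of_lt (hNn n (le_trans (le_max_left _ _) hn)))
  obtain ⟨D, hD, hDn⟩ := aux_key ha_nonneg hc hN
  -- eventual bound on the function
  have htend : Tendsto (fun l : ℝ => Real.log D / l ^ 2) atTop (nhds 0) :=
    Tendsto.div_atTop tendsto_const_nhds (tendsto_pow_atTop two_ne_zero)
  have hev2 : ∀ᶠ l : ℝ in atTop, Real.log D / l ^ 2 < ε / 2 :=
    htend.eventually_lt_const (by positivity)
  have hmain : ∀ᶠ l : ℝ in atTop,
      1 / l ^ 2 * Real.log (∑' n : ℕ, a n * l ^ (2 * n)) ≤ L + ε := by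
    filter_upwards [eventually_ge_atTop (1:ℝ), hev2] with l hl hlog
    have hl0 : (0:ℝ) < l := lt_of_lt_of_le one_pos hl
    have hl2 : (0:ℝ) < l ^ 2 := by positivity
    obtain ⟨hS, hle⟩ := aux_key2 ha_nonneg hc hD hDn l
    have h1 : (1:ℝ) ≤ ∑' n : ℕ, a n * l ^ (2 * n) := hpos l hl
    have hlog2 : Real.log (∑' n : ℕ, a n * l ^ (2 * n)) ≤ Real.log D + c * l ^ 2 := by
      have := Real.log_le_log (by linarith) hle
      rwa [Real.log_mul (by linarith) (Real.exp_ne_zero _), Real.log_exp] at this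
    have hstep : 1 / l ^ 2 * Real.log (∑' n : ℕ, a n * l ^ (2 * n)) ≤
        1 / l ^ 2 * (Real.log D + c * l ^ 2) :=
      mul_le_mul_of_nonneg_left hlog2 (by positivity)
    have heq : 1 / l ^ 2 * (Real.log D + c * l ^ 2) = Real.log D / l ^ 2 + c := by
      field_simp
    rw [heq] at hstep
    calc 1 / l ^ 2 * Real.log (∑' n : ℕ, a n * l ^ (2 * n))
        ≤ Real.log D / l ^ 2 + c := hstep
      _ ≤ ε / 2 + (L + ε / 2) := by linarith
      _ = L + ε := by ring
  exact limsup_le_of_le hcob hmain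
end

section
/- Let (Ω, 𝓕, P) be a probability space and let X : Ω → ℝ be a bounded nonnegative random variable. Suppose that for every m ∈ ℕ there exist random variables Y₁, …, Y_{2^m} : Ω → ℝ which are independent, each having the same distribution as X, and such that X ≤ 2^{−m} Σ_{i=1}^{2^m} Y_i almost surely. Then X = E[X] almost surely. -/
/-!
Let `A` be the average of `n ≥ 2` pairwise independent copies of `X` (here `m = 1`). Since
`X ≤ A` a.s. and `E[A] = E[X]`, in fact `X = A` a.s., hence `Var X = Var A = Var X / n`,
so `Var X = 0`.
-/

open MeasureTheory ProbabilityTheory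

namespace ProbabilityTheory

variable {Ω ι : Type*} [MeasurableSpace Ω] {μ : Measure Ω} [Fintype ι]
  {X : Ω → ℝ} {Y : ι → Ω → ℝ}

lemma integral_average_of_identDistrib [Nonempty ι] (hX : Integrable X μ)
    (hY : ∀ i, IdentDistrib (Y i) X μ μ) :
    ∫ ω, (Fintype.card ι : ℝ)⁻¹ * ∑ i, Y i ω ∂μ = μ[X] := by
  have hYint : ∀ i, Integrable (Y i) μ := fun i => (hY i).integrable_iff.mpr hX
  rw [integral_const_mul, integral_finsetSum _ fun i _ => hYint i]
  simp only [fun i => (hY i).integral_eq, Finset.sum_const, Finset.card_univ, nsmul_eq_mul]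
  field_simp

lemma variance_average_of_pairwise_indepFun (hX : MemLp X 2 μ)
    (hind : Pairwise fun i j => Y i ⟂ᵢ[μ] Y j) (hY : ∀ i, IdentDistrib (Y i) X μ μ) :
    Var[fun ω => (Fintype.card ι : ℝ)⁻¹ * ∑ i, Y i ω; μ] = Var[X; μ] / Fintype.card ι := by
  have hYL2 : ∀ i, MemLp (Y i) 2 μ := fun i => (hY i).memLp_iff.mpr hX
  have hsum : Var[fun ω => ∑ i, Y i ω; μ] = Fintype.card ι * Var[X; μ] := by
    simp only [← Finset.sum_fn]
    rw [IndepFun.variance_sum (fun i _ => hYL2 i) fun i _ j _ hij => hind hij]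
    simp [fun i => (hY i).variance_eq]
  rw [variance_const_mul, hsum]
  rcases (Fintype.card ι).eq_zero_or_pos with h0 | hpos
  · simp [h0]
  · field_simp

theorem ae_eq_integral_of_ae_le_average [IsFiniteMeasure μ] (hι : 1 < Fintype.card ι)
    (hX : MemLp X 2 μ)
    (hind : Pairwise fun i j => Y i ⟂ᵢ[μ] Y j) (hY : ∀ i, IdentDistrib (Y i) X μ μ)
    (hle : ∀ᵐ ω ∂μ, X ω ≤ (Fintype.card ι : ℝ)⁻¹ * ∑ i, Y i ω) :
    X =ᵐ[μ] fun _ => μ[X] := by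
  have : Nonempty ι := Fintype.card_pos_iff.mp (by omega)
  set A : Ω → ℝ := fun ω => (Fintype.card ι : ℝ)⁻¹ * ∑ i, Y i ω
  have hXint : Integrable X μ := hX.integrable one_le_two
  have hAint : Integrable A μ :=
    (integrable_finsetSum _ fun i _ => (hY i).integrable_iff.mpr hXint).const_mul _
  have hXA : X =ᵐ[μ] A :=
    (integral_eq_iff_of_ae_le hXint hAint hle).mp
      (integral_average_of_identDistrib hXint hY).symm
  have hvar : Var[X; μ] = Var[X; μ] / Fintype.card ι :=
    (variance_congr hXA).trans (variance_average_of_pairwise_indepFun hX hind hY)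
  have hn : (1 : ℝ) < Fintype.card ι := by exact_mod_cast hι
  refine ae_eq_integral_of_variance_eq_zero hX ?_
  rw [eq_div_iff (by positivity)] at hvar
  nlinarith [variance_nonneg X μ]

end ProbabilityTheory

/-- If a bounded nonnegative random variable `X` is, for every `m`, almost surely
dominated by the average of `2^m` independent copies of itself, then `X` is almost
surely equal to its expectation. -/
theorem stmt_12 {Ω : Type*} [MeasurableSpace Ω] (P : Measure Ω) [IsProbabilityMeasure P]
    (X : Ω → ℝ) (hX_meas : Measurable X) (hX_nonneg : ∀ ω, 0 ≤ X ω)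
    (hX_bdd : ∃ M : ℝ, ∀ ω, X ω ≤ M)
    (h : ∀ m : ℕ, ∃ Y : Fin (2 ^ m) → Ω → ℝ,
      iIndepFun Y P ∧
      (∀ i, IdentDistrib (Y i) X P P) ∧
      (∀ᵐ ω ∂P, X ω ≤ (2 ^ m : ℝ)⁻¹ * ∑ i, Y i ω)) :
    X =ᵐ[P] fun _ => ∫ x, X x ∂P := by
  obtain ⟨M, hM⟩ := hX_bdd
  have hX : MemLp X 2 P :=
    memLp_of_bounded (.of_forall fun ω => ⟨hX_nonneg ω, hM ω⟩) hX_meas.aestronglyMeasurable 2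
  obtain ⟨Y, hind, hY, hle⟩ := h 1
  refine ae_eq_integral_of_ae_le_average (by simp) hX (fun i j hij => hind.indepFun hij) hY ?_
  simpa using hle
end

section
/- Let b, c > 0 and r ∈ [−1, 1). Suppose a : (0, ∞) → [0, ∞) satisfies cosh(a(λ)) = cosh(λb) · cosh(λc) − r · sinh(λb) · sinh(λc) for all λ > 0. Then λ(b + c) − a(λ) converges to log(2 / (1 − r)) as λ → ∞. -/
open Real Filter

/-- The hyperbolic triangle defect `λ(b+c) − a(λ)` converges to `log(2/(1−r))`
as `λ → ∞`, where `a(λ)` is the side opposite the angle `arccos r` in the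
hyperbolic triangle with adjacent sides `λb` and `λc`. -/
theorem stmt_13 (b c r : ℝ) (hb : 0 < b) (hc : 0 < c)
    (hr₁ : -1 ≤ r) (hr₂ : r < 1) (a : ℝ → ℝ)
    (ha_nonneg : ∀ l : ℝ, 0 < l → 0 ≤ a l)
    (ha : ∀ l : ℝ, 0 < l →
      Real.cosh (a l) = Real.cosh (l * b) * Real.cosh (l * c)
        - r * (Real.sinh (l * b) * Real.sinh (l * c))) :
    Filter.Tendsto (fun l : ℝ => l * (b + c) - a l) Filter.atTop
      (nhds (Real.log (2 / (1 - r)))) := by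
  set g : ℝ → ℝ := fun l =>
    (Real.cosh (l * b) * Real.cosh (l * c)
      - r * (Real.sinh (l * b) * Real.sinh (l * c))) * Real.exp (-(l * (b + c)))
    with hg
  -- pointwise formula for g
  have gform : ∀ l : ℝ, g l = (1 - r) / 4 + (1 + r) / 4 * Real.exp (-(2 * b * l))
      + (1 + r) / 4 * Real.exp (-(2 * c * l)) + (1 - r) / 4 * Real.exp (-(2 * (b + c) * l)) := by
    intro l
    have e1 : Real.exp (-(l * (b + c))) = (Real.exp (l * b) * Real.exp (l * c))⁻¹ := by
      rw [← Real.exp_add, ← Real.exp_neg]; ring_nf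
    have e2 : Real.exp (-(2 * b * l)) = (Real.exp (l * b))⁻¹ ^ 2 := by
      rw [← Real.exp_neg, ← Real.exp_nat_mul]; ring_nf
    have e3 : Real.exp (-(2 * c * l)) = (Real.exp (l * c))⁻¹ ^ 2 := by
      rw [← Real.exp_neg, ← Real.exp_nat_mul]; ring_nf
    have e4 : Real.exp (-(2 * (b + c) * l)) = ((Real.exp (l * b))⁻¹ * (Real.exp (l * c))⁻¹) ^ 2 := by
      rw [← Real.exp_neg, ← Real.exp_neg, ← Real.exp_add, ← Real.exp_nat_mul]; ring_nf
    have eb : Real.exp (-(l * b)) = (Real.exp (l * b))⁻¹ := Real.exp_neg _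
    have ec : Real.exp (-(l * c)) = (Real.exp (l * c))⁻¹ := Real.exp_neg _
    have pb : (0:ℝ) < Real.exp (l * b) := Real.exp_pos _
    have pc : (0:ℝ) < Real.exp (l * c) := Real.exp_pos _
    rw [hg]
    simp only [Real.cosh_eq, Real.sinh_eq, e1, e2, e3, e4, eb, ec]
    field_simp
    ring
  -- each exponential term tends to 0
  have texp : ∀ k : ℝ, 0 < k → Tendsto (fun l : ℝ => Real.exp (-(k * l))) atTop (nhds 0) := by
    intro k hk
    exact Real.tendsto_exp_neg_atTop_nhds_zero.comp
      ((tendsto_const_mul_atTop_of_pos hk).mpr tendsto_id)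
  have gt : Tendsto g atTop (nhds ((1 - r) / 4)) := by
    have : Tendsto (fun l : ℝ => (1 - r) / 4 + (1 + r) / 4 * Real.exp (-(2 * b * l))
        + (1 + r) / 4 * Real.exp (-(2 * c * l)) + (1 - r) / 4 * Real.exp (-(2 * (b + c) * l)))
        atTop (nhds ((1 - r) / 4 + (1 + r) / 4 * 0 + (1 + r) / 4 * 0 + (1 - r) / 4 * 0)) := by
      exact (((tendsto_const_nhds.add ((texp _ (by positivity)).const_mul _)).add
        ((texp _ (by positivity)).const_mul _)).add ((texp _ (by positivity)).const_mul _))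
    simpa [gform] using this.congr (fun l => (gform l).symm)
  -- define h
  set h : ℝ → ℝ := fun l => Real.sqrt (g l ^ 2 - Real.exp (-(l * (b + c))) ^ 2) with hh
  have ht : Tendsto h atTop (nhds ((1 - r) / 4)) := by
    have h1 : Tendsto (fun l : ℝ => Real.exp (-(l * (b + c)))) atTop (nhds 0) := by
      refine (texp (b + c) (by positivity)).congr (fun l => ?_)
      ring_nf
    have hs : Tendsto (fun l : ℝ => g l ^ 2 - Real.exp (-(l * (b + c))) ^ 2) atTop
        (nhds (((1 - r) / 4) ^ 2 - 0 ^ 2)) := (gt.pow 2).sub (h1.pow 2)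
    have := (Real.continuous_sqrt.tendsto _).comp hs
    have h4 : Real.sqrt (((1 - r) / 4) ^ 2 - 0 ^ 2) = (1 - r) / 4 := by
      rw [show ((1 - r) / 4) ^ 2 - (0:ℝ) ^ 2 = ((1 - r) / 4) ^ 2 by ring,
        Real.sqrt_sq (by linarith)]
    rw [h4] at this
    exact this
  -- key identity: for l > 0, exp (l*(b+c) - a l) = (g l + h l)⁻¹
  have key : ∀ l : ℝ, 0 < l → Real.exp (l * (b + c) - a l) = (g l + h l)⁻¹ := by
    intro l hl
    have hga : g l = Real.cosh (a l) * Real.exp (-(l * (b + c))) := by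
      rw [hg, ha l hl]
    have hsh : h l = Real.sinh (a l) * Real.exp (-(l * (b + c))) := by
      have hnn : 0 ≤ Real.sinh (a l) := Real.sinh_nonneg_iff.mpr (ha_nonneg l hl)
      have : g l ^ 2 - Real.exp (-(l * (b + c))) ^ 2
          = (Real.sinh (a l) * Real.exp (-(l * (b + c)))) ^ 2 := by
        rw [hga]
        have := Real.cosh_sq_sub_sinh_sq (a l)
        nlinarith [Real.exp_pos (-(l * (b + c)))]
      rw [hh]
      simp only [this]
      exact Real.sqrt_sq (by positivity)
    have : g l + h l = Real.exp (a l - l * (b + c)) := by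
      rw [hga, hsh, ← add_mul, Real.cosh_add_sinh, ← Real.exp_add]
      ring_nf
    rw [this, ← Real.exp_neg]
    ring_nf
  -- limit of exp (l*(b+c) - a l)
  have hlim : Tendsto (fun l : ℝ => Real.exp (l * (b + c) - a l)) atTop (nhds (2 / (1 - r))) := by
    have hsum : Tendsto (fun l => g l + h l) atTop (nhds ((1 - r) / 2)) := by
      have := gt.add ht
      rw [show (1 - r) / 4 + (1 - r) / 4 = (1 - r) / 2 by ring] at this
      exact this
    have hne : (1 - r) / 2 ≠ 0 := by
      have : 0 < 1 - r := by linarith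
      positivity
    have := hsum.inv₀ hne
    have heq : ((1 - r) / 2)⁻¹ = 2 / (1 - r) := by
      field_simp
    rw [heq] at this
    refine Tendsto.congr' ?_ this
    filter_upwards [eventually_gt_atTop 0] with l hl
    exact (key l hl).symm
  -- take log
  have hpos : (0:ℝ) < 2 / (1 - r) := by
    have : 0 < 1 - r := by linarith
    positivity
  have := ((Real.continuousAt_log hpos.ne').tendsto).comp hlim
  exact this.congr (fun l => by simp [Function.comp, Real.log_exp])
end
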